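/- arXiv:2310.07805 — 7 statements merged into one kernel-verified Lean document; each statement's English description precedes it below -/
import Mathlib

section
/- Let g, ω ∈ ℝ and define P : ℝ → Matrix (Fin 2) (Fin 2) ℝ by P t = !![ω(t−1)² − g²(t−1)³/3, ω(t−1) − g²(t−1)²/2; ω(t−1) − g²(t−1)²/2, g²(1−t) + ω]. Then P satisfies the terminal condition P 1 = !![0, 0; 0, ω], and for every t ∈ ℝ, P has derivative A * P t + P t * Aᵀ − !![0, 0; 0, g²] at t, where A = !![0, 1; 0, 0]. That is, P solves the Lyapunov equation Ṗ = AP + PAᵀ − ggᵀ for the double-integrator system with constant noise vector g = (0, g). -/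
open Matrix

/-!
With `A = !![0, 1; 0, 0]`, the right-hand side `A P + P Aᵀ - !![0, 0; 0, g²]` only shifts entries of
`P`: it equals `!![P₀₁ + P₁₀, P₁₁; P₁₁, -g²]`. So the Lyapunov equation is a triangular system of
scalar ODEs, `P₁₁' = -g²`, `P₀₁' = P₁₁`, `P₀₀' = 2 P₀₁`, which the given polynomials in `t - 1`
solve by termwise differentiation.
-/

theorem doubleIntegrator_lyapunov_rhs {R : Type*} [CommRing R] (P : Matrix (Fin 2) (Fin 2) R)
    (q : R) :
    !![0, 1; 0, 0] * P + P * (!![0, 1; 0, 0] : Matrix (Fin 2) (Fin 2) R)ᵀ - !![0, 0; 0, q] =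
      !![P 0 1 + P 1 0, P 1 1; P 1 1, -q] := by
  ext i j
  fin_cases i <;> fin_cases j <;>
    simp [mul_apply, vecMul, dotProduct, Fin.sum_univ_two, add_comm]

section LyapunovSolutionEntries

variable (g ω t : ℝ)

theorem hasDerivAt_lyapunovSolution_00 :
    HasDerivAt (fun s => ω * (s - 1) ^ 2 - g ^ 2 * (s - 1) ^ 3 / 3)
      (2 * (ω * (t - 1) - g ^ 2 * (t - 1) ^ 2 / 2)) t := by
  have h : HasDerivAt (fun s : ℝ => s - 1) 1 t := (hasDerivAt_id' t).sub_const 1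
  exact (((h.pow 2).const_mul ω).sub (((h.pow 3).const_mul (g ^ 2)).div_const 3)).congr_deriv
    (by push_cast; ring)

theorem hasDerivAt_lyapunovSolution_01 :
    HasDerivAt (fun s => ω * (s - 1) - g ^ 2 * (s - 1) ^ 2 / 2) (g ^ 2 * (1 - t) + ω) t := by
  have h : HasDerivAt (fun s : ℝ => s - 1) 1 t := (hasDerivAt_id' t).sub_const 1
  exact ((h.const_mul ω).sub (((h.pow 2).const_mul (g ^ 2)).div_const 2)).congr_deriv
    (by push_cast; ring)

theorem hasDerivAt_lyapunovSolution_11 :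
    HasDerivAt (fun s => g ^ 2 * (1 - s) + ω) (-g ^ 2) t :=
  ((((hasDerivAt_id' t).const_sub 1).const_mul (g ^ 2)).add_const ω).congr_deriv (by ring)

end LyapunovSolutionEntries

/-- The explicit matrix function `P` satisfies the terminal condition `P 1 = !![0,0;0,ω]`
and solves (entrywise) the Lyapunov equation `Ṗ = A P + P Aᵀ − g gᵀ` for the
double-integrator drift `A = !![0,1;0,0]` and noise vector `(0, g)`. -/
theorem lyapunov_solution_double_integrator
    (g ω : ℝ) (P : ℝ → Matrix (Fin 2) (Fin 2) ℝ)
    (hP : ∀ t, P t =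
      !![ω * (t - 1) ^ 2 - g ^ 2 * (t - 1) ^ 3 / 3, ω * (t - 1) - g ^ 2 * (t - 1) ^ 2 / 2;
         ω * (t - 1) - g ^ 2 * (t - 1) ^ 2 / 2, g ^ 2 * (1 - t) + ω]) :
    P 1 = !![0, 0; 0, ω] ∧
    ∀ t : ℝ, ∀ i j : Fin 2,
      HasDerivAt (fun s => P s i j)
        (((!![0, 1; 0, 0] : Matrix (Fin 2) (Fin 2) ℝ) * P t
          + P t * (!![0, 1; 0, 0] : Matrix (Fin 2) (Fin 2) ℝ)ᵀ
          - !![0, 0; 0, g ^ 2]) i j) t := by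
  refine ⟨by rw [hP]; norm_num, fun t i j => ?_⟩
  rw [doubleIntegrator_lyapunov_rhs]
  simp only [hP]
  fin_cases i <;> fin_cases j <;>
    simp only [Fin.zero_eta, Fin.mk_one, Fin.isValue, of_apply, cons_val', cons_val_zero, cons_val_one,
      cons_val_fin_one]
  · simpa only [two_mul] using hasDerivAt_lyapunovSolution_00 g ω t
  · exact hasDerivAt_lyapunovSolution_01 g ω t
  · exact hasDerivAt_lyapunovSolution_01 g ω t
  · exact hasDerivAt_lyapunovSolution_11 g ω t
end

section
/- Let V be a real normed vector space and x₁ ∈ V, and define μˣ : ℝ → V by μˣ t = (t²(t² − 4t + 6)/3) • x₁ and μᵛ : ℝ → V by μᵛ t = (4t(t² − 3t + 3)/3) • x₁. Then μˣ 0 = 0, μᵛ 0 = 0, μˣ 1 = x₁, and for every t < 1: μˣ has derivative μᵛ t at t, and μᵛ has derivative (4/(1−t)) • ((1−t)⁻¹ • (x₁ − μˣ t) − μᵛ t) at t. That is, (μˣ, μᵛ) is the solution of the mean ODE μ̇ˣ = μᵛ, μ̇ᵛ = g² P₁₁ ((x₁ − μˣ)/(1−t) − μᵛ) of the optimally controlled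 phase-space bridge started at the origin, where g² P₁₁ = 4/(1−t). -/
/-!
Both means are multiples of `x₁`, so everything reduces to scalar polynomials. Writing `s = 1 - t`,
the coefficients are `x₁ - μˣ = s (4 - s³)/3 • x₁` and `μᵛ = 4 (1 - s³)/3 • x₁`; hence the feedback
term `(x₁ - μˣ)/s - μᵛ` is `s³ • x₁`, and the right-hand side `(4/s) s³ • x₁ = 4 s² • x₁` is exactly
the derivative of `μᵛ`.
-/

namespace BridgeMean

noncomputable def posCoeff (t : ℝ) : ℝ := t ^ 2 * (t ^ 2 - 4 * t + 6) / 3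

noncomputable def velCoeff (t : ℝ) : ℝ := 4 * t * (t ^ 2 - 3 * t + 3) / 3

lemma posCoeff_zero : posCoeff 0 = 0 := by norm_num [posCoeff]

lemma velCoeff_zero : velCoeff 0 = 0 := by norm_num [velCoeff]

lemma posCoeff_one : posCoeff 1 = 1 := by norm_num [posCoeff]

lemma hasDerivAt_posCoeff (t : ℝ) : HasDerivAt posCoeff (velCoeff t) t := by
  have h := ((hasDerivAt_pow 2 t).mul (((hasDerivAt_pow 2 t).sub
    ((hasDerivAt_id t).const_mul 4)).add_const 6)).div_const 3
  exact h.congr_deriv (by simp only [velCoeff, id_eq, Pi.sub_apply]; push_cast; ring)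

lemma hasDerivAt_velCoeff (t : ℝ) : HasDerivAt velCoeff (4 * (1 - t) ^ 2) t := by
  have h := (((hasDerivAt_id t).const_mul 4).mul (((hasDerivAt_pow 2 t).sub
    ((hasDerivAt_id t).const_mul 3)).add_const 3)).div_const 3
  exact h.congr_deriv (by simp only [id_eq, Pi.sub_apply]; push_cast; ring)

lemma feedback_eq {t : ℝ} (ht : t ≠ 1) :
    4 / (1 - t) * ((1 - t)⁻¹ * (1 - posCoeff t) - velCoeff t) = 4 * (1 - t) ^ 2 := by
  have hs : 1 - t ≠ 0 := sub_ne_zero.mpr ht.symm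
  have h_pos : 1 - posCoeff t = (1 - t) * (4 - (1 - t) ^ 3) / 3 := by unfold posCoeff; ring
  have h_vel : velCoeff t = 4 * (1 - (1 - t) ^ 3) / 3 := by unfold velCoeff; ring
  rw [h_pos, h_vel]
  field_simp
  ring

lemma feedback_smul_eq {V : Type*} [AddCommGroup V] [Module ℝ V] (x₁ : V) {t : ℝ} (ht : t ≠ 1) :
    (4 / (1 - t)) • ((1 - t)⁻¹ • (x₁ - posCoeff t • x₁) - velCoeff t • x₁) =
      (4 * (1 - t) ^ 2) • x₁ := by
  rw [← feedback_eq ht]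
  module

end BridgeMean

/-- The means `μˣ, μᵛ` of the optimally controlled phase-space bridge started at the
origin satisfy `μˣ 0 = 0`, `μᵛ 0 = 0`, `μˣ 1 = x₁`, and solve the mean ODE
`μ̇ˣ = μᵛ`, `μ̇ᵛ = (4/(1−t)) ((x₁ − μˣ)/(1−t) − μᵛ)` for all `t < 1`. -/
theorem bridge_mean_ode
    {V : Type*} [NormedAddCommGroup V] [NormedSpace ℝ V] (x₁ : V)
    (μx μv : ℝ → V)
    (hμx : ∀ t, μx t = (t ^ 2 * (t ^ 2 - 4 * t + 6) / 3) • x₁)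
    (hμv : ∀ t, μv t = (4 * t * (t ^ 2 - 3 * t + 3) / 3) • x₁) :
    μx 0 = 0 ∧ μv 0 = 0 ∧ μx 1 = x₁ ∧
    ∀ t : ℝ, t < 1 →
      HasDerivAt μx (μv t) t ∧
      HasDerivAt μv ((4 / (1 - t)) • ((1 - t)⁻¹ • (x₁ - μx t) - μv t)) t := by
  obtain rfl : μx = fun t => BridgeMean.posCoeff t • x₁ := funext hμx
  obtain rfl : μv = fun t => BridgeMean.velCoeff t • x₁ := funext hμv
  refine ⟨by simp [BridgeMean.posCoeff_zero], by simp [BridgeMean.velCoeff_zero],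
    by simp [BridgeMean.posCoeff_one],
    fun t ht => ⟨(BridgeMean.hasDerivAt_posCoeff t).smul_const x₁, ?_⟩⟩
  rw [BridgeMean.feedback_smul_eq x₁ ht.ne]
  exact (BridgeMean.hasDerivAt_velCoeff t).smul_const x₁
end

section
/- Let V be a real vector space, let g ∈ ℝ with g ≠ 0, let t < 1, let Lˣˣ, Lˣᵛ, Lᵛᵛ ∈ ℝ, and let x₁, ε₀, ε₁ ∈ V. Set μˣ t = (t²(t² − 4t + 6)/3) • x₁, μᵛ t = (4t(t² − 3t + 3)/3) • x₁, P₁₁ := −4/(g²(t−1)), x_t := μˣ t + Lˣˣ • ε₀, and v_t := μᵛ t + Lˣᵛ • ε₀ + Lᵛᵛ • ε₁. Then the optimal acceleration admits the representation (g² P₁₁) • ((1−t)⁻¹ • (x₁ − x_t) − v_t) = (4(1−t)²) • x₁ − (g² P₁₁) • ((Lˣˣ/(1−t) + Lˣᵛ) • ε₀ + Lᵛᵛ • ε₁). -/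
/-- Representation of the optimal acceleration in terms of the data point `x₁` and
the noise vectors `ε₀, ε₁`:
`g² P₁₁ ((x₁ − x_t)/(1−t) − v_t) = 4(1−t)² x₁ − g² P₁₁ ((Lˣˣ/(1−t) + Lˣᵛ) ε₀ + Lᵛᵛ ε₁)`. -/
theorem optimal_acceleration_noise_representation
    {V : Type*} [AddCommGroup V] [Module ℝ V]
    (g t : ℝ) (hg : g ≠ 0) (ht : t < 1)
    (Lxx Lxv Lvv : ℝ) (x₁ ε₀ ε₁ : V)
    (μx μv xt vt : V) (P₁₁ : ℝ)
    (hμx : μx = (t ^ 2 * (t ^ 2 - 4 * t + 6) / 3) • x₁)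
    (hμv : μv = (4 * t * (t ^ 2 - 3 * t + 3) / 3) • x₁)
    (hP₁₁ : P₁₁ = -4 / (g ^ 2 * (t - 1)))
    (hxt : xt = μx + Lxx • ε₀)
    (hvt : vt = μv + Lxv • ε₀ + Lvv • ε₁) :
    (g ^ 2 * P₁₁) • ((1 - t)⁻¹ • (x₁ - xt) - vt) =
      (4 * (1 - t) ^ 2) • x₁
        - (g ^ 2 * P₁₁) • ((Lxx / (1 - t) + Lxv) • ε₀ + Lvv • ε₁) := by
  have h1t : (1 : ℝ) - t ≠ 0 := by linarith
  have hg2 : g ^ 2 ≠ 0 := pow_ne_zero _ hg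
  have h2 : t - 1 ≠ 0 := by linarith
  have hkey : g ^ 2 * P₁₁ = 4 / (1 - t) := by
    rw [hP₁₁]; field_simp; ring
  subst hμx hμv hxt hvt
  rw [hkey]
  match_scalars <;> field_simp <;> ring
end

section
/- Let V be a real vector space, let g ∈ ℝ with g ≠ 0, let t < 1, let Lˣˣ, Lˣᵛ, Lᵛᵛ, ℓ ∈ ℝ with Lˣˣ ≠ 0 and Lᵛᵛ ≠ 0, and let x₁, ε₀, ε₁ ∈ V. Set cˣ t := t²(t² − 4t + 6)/3, cᵛ t := 4t(t² − 3t + 3)/3, μˣ t := cˣ t • x₁, μᵛ t := cᵛ t • x₁, P₁₁ := −4/(g²(t−1)), x_t := μˣ t + Lˣˣ • ε₀, v_t := μᵛ t + Lˣᵛ • ε₀ + Lᵛᵛ • ε₁, β := (Lᵛᵛ + ℓ/(2 P₁₁))/Lᵛᵛ, α := (Lˣˣ/(1−t) + Lˣᵛ − β Lˣᵛ)/Lˣˣ, and F := (4(1−t)²) • x₁ − (g² P₁₁) • ((Lˣˣ/(1−t) + Lˣᵛ) • ε₀ + Lᵛᵛ • ε₁) − (g² ℓ / 2) • ε₁. Then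 F + (g² P₁₁) • (α • x_t + β • v_t) = (4(1−t)² + g² P₁₁ (α · cˣ t + β · cᵛ t)) • x₁; in particular, whenever the scalar 4(1−t)² + g² P₁₁ (α cˣ t + β cᵛ t) is nonzero, the target data point x₁ is recovered as x₁ = (4(1−t)² + g² P₁₁ (α cˣ t + β cᵛ t))⁻¹ • (F + (g² P₁₁) • (α • x_t + β • v_t)). (Sampling-hop for the AGM probabilistic ODE.) -/
/-!
Substituting `x_t = cˣ x₁ + Lˣˣ ε₀` and `v_t = cᵛ x₁ + Lˣᵛ ε₀ + Lᵛᵛ ε₁`, the left-hand side is a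
combination of `x₁`, `ε₀` and `ε₁`. The coefficients `α, β` are chosen exactly so that the `ε₀`-
and `ε₁`-coefficients vanish: `α Lˣˣ + β Lˣᵛ = Lˣˣ/(1−t) + Lˣᵛ`, and `β Lᵛᵛ − Lᵛᵛ = ℓ/(2 P₁₁)`
cancels the score term `(g² ℓ/2) ε₁`. What remains is a multiple of `x₁`, which can be inverted.
-/

theorem noise_cancelling_combination {V : Type*} [AddCommGroup V] [Module ℝ V]
    (A k s α β cx cv Lxx Lxv Lvv a₀ : ℝ) (x₁ ε₀ ε₁ : V)
    (hε₀ : α * Lxx + β * Lxv = a₀) (hε₁ : k * (β * Lvv - Lvv) = s) :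
    (A • x₁ - k • (a₀ • ε₀ + Lvv • ε₁) - s • ε₁)
        + k • (α • (cx • x₁ + Lxx • ε₀) + β • (cv • x₁ + Lxv • ε₀ + Lvv • ε₁)) =
      (A + k * (α * cx + β * cv)) • x₁ := by
  subst hε₀ hε₁
  match_scalars <;> ring

theorem sampling_hop_ode_general
    {V : Type*} [AddCommGroup V] [Module ℝ V]
    (g t : ℝ) (hg : g ≠ 0) (ht : t < 1)
    (Lxx Lxv Lvv ℓ : ℝ) (hLxx : Lxx ≠ 0) (hLvv : Lvv ≠ 0)
    (x₁ ε₀ ε₁ : V)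
    (cx cv : ℝ) (μx μv xt vt : V) (P₁₁ α β : ℝ) (F : V)
    (hμx : μx = cx • x₁) (hμv : μv = cv • x₁)
    (hP₁₁ : P₁₁ = -4 / (g ^ 2 * (t - 1)))
    (hxt : xt = μx + Lxx • ε₀)
    (hvt : vt = μv + Lxv • ε₀ + Lvv • ε₁)
    (hβ : β = (Lvv + ℓ / (2 * P₁₁)) / Lvv)
    (hα : α = (Lxx / (1 - t) + Lxv - β * Lxv) / Lxx)
    (hF : F = (4 * (1 - t) ^ 2) • x₁
        - (g ^ 2 * P₁₁) • ((Lxx / (1 - t) + Lxv) • ε₀ + Lvv • ε₁)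
        - (g ^ 2 * ℓ / 2) • ε₁) :
    F + (g ^ 2 * P₁₁) • (α • xt + β • vt) =
      (4 * (1 - t) ^ 2 + g ^ 2 * P₁₁ * (α * cx + β * cv)) • x₁ ∧
    (4 * (1 - t) ^ 2 + g ^ 2 * P₁₁ * (α * cx + β * cv) ≠ 0 →
      x₁ = (4 * (1 - t) ^ 2 + g ^ 2 * P₁₁ * (α * cx + β * cv))⁻¹ •
        (F + (g ^ 2 * P₁₁) • (α • xt + β • vt))) := by
  have hP : P₁₁ ≠ 0 := hP₁₁ ▸
    div_ne_zero (by norm_num) (mul_ne_zero (pow_ne_zero 2 hg) (sub_ne_zero.2 ht.ne))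
  have hε₀ : α * Lxx + β * Lxv = Lxx / (1 - t) + Lxv := by
    rw [hα, div_mul_cancel₀ _ hLxx]; ring
  have hε₁ : g ^ 2 * P₁₁ * (β * Lvv - Lvv) = g ^ 2 * ℓ / 2 := by
    rw [hβ, div_mul_cancel₀ _ hLvv]; field_simp; ring
  have hop : F + (g ^ 2 * P₁₁) • (α • xt + β • vt) =
      (4 * (1 - t) ^ 2 + g ^ 2 * P₁₁ * (α * cx + β * cv)) • x₁ := by
    rw [hF, hxt, hvt, hμx, hμv]
    exact noise_cancelling_combination _ _ _ _ _ _ _ _ _ _ _ _ _ _ hε₀ hε₁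
  exact ⟨hop, fun hne => (eq_inv_smul_iff₀ hne).2 hop.symm⟩

/-- Sampling-hop for the AGM probabilistic ODE: with the force
`F = 4(1−t)² x₁ − g² P₁₁ ((Lˣˣ/(1−t) + Lˣᵛ) ε₀ + Lᵛᵛ ε₁) − (g² ℓ/2) ε₁`
and suitable coefficients `α, β`, one has
`F + g² P₁₁ (α x_t + β v_t) = (4(1−t)² + g² P₁₁ (α cˣ t + β cᵛ t)) x₁`,
and hence `x₁` is recovered whenever the scalar on the right is nonzero. -/
theorem sampling_hop_ode
    {V : Type*} [AddCommGroup V] [Module ℝ V]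
    (g t : ℝ) (hg : g ≠ 0) (ht : t < 1)
    (Lxx Lxv Lvv ℓ : ℝ) (hLxx : Lxx ≠ 0) (hLvv : Lvv ≠ 0)
    (x₁ ε₀ ε₁ : V)
    (cx cv : ℝ) (μx μv xt vt : V) (P₁₁ α β : ℝ) (F : V)
    (hcx : cx = t ^ 2 * (t ^ 2 - 4 * t + 6) / 3)
    (hcv : cv = 4 * t * (t ^ 2 - 3 * t + 3) / 3)
    (hμx : μx = cx • x₁) (hμv : μv = cv • x₁)
    (hP₁₁ : P₁₁ = -4 / (g ^ 2 * (t - 1)))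
    (hxt : xt = μx + Lxx • ε₀)
    (hvt : vt = μv + Lxv • ε₀ + Lvv • ε₁)
    (hβ : β = (Lvv + ℓ / (2 * P₁₁)) / Lvv)
    (hα : α = (Lxx / (1 - t) + Lxv - β * Lxv) / Lxx)
    (hF : F = (4 * (1 - t) ^ 2) • x₁
        - (g ^ 2 * P₁₁) • ((Lxx / (1 - t) + Lxv) • ε₀ + Lvv • ε₁)
        - (g ^ 2 * ℓ / 2) • ε₁) :
    F + (g ^ 2 * P₁₁) • (α • xt + β • vt) =
      (4 * (1 - t) ^ 2 + g ^ 2 * P₁₁ * (α * cx + β * cv)) • x₁ ∧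
    (4 * (1 - t) ^ 2 + g ^ 2 * P₁₁ * (α * cx + β * cv) ≠ 0 →
      x₁ = (4 * (1 - t) ^ 2 + g ^ 2 * P₁₁ * (α * cx + β * cv))⁻¹ •
        (F + (g ^ 2 * P₁₁) • (α • xt + β • vt))) :=
  sampling_hop_ode_general g t hg ht Lxx Lxv Lvv ℓ hLxx hLvv x₁ ε₀ ε₁ cx cv μx μv xt vt P₁₁ α β F
    hμx hμv hP₁₁ hxt hvt hβ hα hF
end

section
/- Let a, b, c ∈ ℝ with a > 0 and a·c − b² > 0, let Σ := !![a, b; b, c] and L := !![√a, 0; b/√a, √((a·c − b²)/a)]. Let ε = (ε₀, ε₁) ∈ ℝ² and μ ∈ ℝ², and set m := μ + L.mulVec ε. Then the second component of Σ⁻¹.mulVec (m − μ) equals ℓ · ε₁, where ℓ := √(a/(a·c − b²)). Consequently the velocity score of the Gaussian N(μ, Σ) at m = μ + Lε is ∇_v log p(m) = −ℓ ε₁. -/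
/-!
Since `Σ = L Lᵀ`, we have `Σ⁻¹ (L ε) = (Lᵀ)⁻¹ ε`. The matrix `Lᵀ` is upper triangular, so the
second row of its inverse is `(0, 1 / L₁₁)`, and `1 / √((ac − b²)/a) = √(a/(ac − b²))`.
-/

open Matrix Real

theorem Matrix.inv_mul_transpose_mulVec_mulVec {n R : Type*} [Fintype n] [DecidableEq n]
    [CommRing R] (L : Matrix n n R) (hL : IsUnit L.det) (v : n → R) :
    (L * Lᵀ)⁻¹ *ᵥ (L *ᵥ v) = Lᵀ⁻¹ *ᵥ v := by
  rw [mul_inv_rev, mulVec_mulVec, Matrix.mul_assoc, nonsing_inv_mul L hL, Matrix.mul_one]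

theorem Matrix.inv_upper_triangular_fin_two_mulVec_apply_one {K : Type*} [Field K]
    {p q r : K} (hp : p ≠ 0) (v : Fin 2 → K) :
    (!![p, q; 0, r]⁻¹ *ᵥ v) 1 = r⁻¹ * v 1 := by
  rw [inv_def, det_fin_two_of, adjugate_fin_two_of]
  simp [mulVec, dotProduct, Fin.sum_univ_two, inv_mul_cancel_right₀ hp]

theorem Matrix.transpose_fin_two_of {α : Type*} (p q r s : α) :
    !![p, q; r, s]ᵀ = !![p, r; q, s] := by
  ext i j
  fin_cases i <;> fin_cases j <;> rfl

theorem cholesky_fin_two_mul_transpose {a b c : ℝ} (ha : 0 < a) (hd : 0 < a * c - b ^ 2) :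
    !![√a, 0; b / √a, √((a * c - b ^ 2) / a)] * !![√a, 0; b / √a, √((a * c - b ^ 2) / a)]ᵀ =
      !![a, b; b, c] := by
  have h₀₀ : √a * √a = a := mul_self_sqrt ha.le
  have h₁₀ : √a * (b / √a) = b := mul_div_cancel₀ b (sqrt_pos.mpr ha).ne'
  have h₁₁ : b / √a * (b / √a) + √((a * c - b ^ 2) / a) * √((a * c - b ^ 2) / a) = c := by
    rw [mul_self_sqrt (by positivity), div_mul_div_comm, h₀₀]
    field_simp
    ring
  rw [transpose_fin_two_of, mul_fin_two, mul_comm (b / √a) √a]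
  simp only [h₀₀, h₁₀, h₁₁, mul_zero, zero_mul, add_zero]

/-- Velocity score of the Gaussian `N(μ, Σ)` at `m = μ + L ε`: the second component of
`Σ⁻¹ (m − μ)` equals `ℓ ε₁` with `ℓ = √(a/(ac − b²))`, so `∇_v log p(m) = −ℓ ε₁`. -/
theorem gaussian_velocity_score
    (a b c : ℝ) (ha : 0 < a) (hd : 0 < a * c - b ^ 2)
    (S L : Matrix (Fin 2) (Fin 2) ℝ)
    (hS : S = !![a, b; b, c])
    (hL : L = !![Real.sqrt a, 0;
                 b / Real.sqrt a, Real.sqrt ((a * c - b ^ 2) / a)])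
    (ε μ : Fin 2 → ℝ) (m : Fin 2 → ℝ)
    (hm : m = μ + L.mulVec ε)
    (ℓ : ℝ) (hℓ : ℓ = Real.sqrt (a / (a * c - b ^ 2))) :
    (S⁻¹.mulVec (m - μ)) 1 = ℓ * ε 1 := by
  have hdetL : IsUnit L.det := by
    rw [hL, det_fin_two_of, zero_mul, sub_zero]
    exact (mul_pos (sqrt_pos.mpr ha) (sqrt_pos.mpr (div_pos hd ha))).ne'.isUnit
  subst hm hℓ
  rw [add_sub_cancel_left, hS, ← cholesky_fin_two_mul_transpose ha hd, ← hL,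
    inv_mul_transpose_mulVec_mulVec L hdetL, hL, transpose_fin_two_of,
    inv_upper_triangular_fin_two_mulVec_apply_one (sqrt_pos.mpr ha).ne', ← sqrt_inv, inv_div]
end

section
/- Let E be a real inner product space (e.g. EuclideanSpace ℝ (Fin d)), let s < 1, r > 0, and x₀, x₁ ∈ E. For u : ℝ → E such that u and τ ↦ ‖u τ‖² are interval-integrable on [s, 1], define the cost J(u) := ∫ τ in s..1, (1/2)‖u τ‖² + (r/2)‖x₀ + (∫ τ in s..1, u τ) − x₁‖². Then J(u) ≥ r‖x₁ − x₀‖²/(2(1 + r(1−s))) for every such u, and the constant control u* ≡ (r/(1 + r(1−s))) • (x₁ − x₀) attains this value: J(u*) = r‖x₁ − x₀‖²/(2(1 + r(1−s))). Hence the constant control u* is optimal for the linear-quadratic terminal-cost control problem ẋ = u, x(s) = x₀. -/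
open MeasureTheory intervalIntegral
open scoped RealInnerProductSpace

/-!
Both terms of the cost are bounded below by the Fenchel inequality
`½‖v‖² ≥ ⟪p, v⟫ - ½‖p‖²`: pointwise under the integral with `p = κ (x₁ - x₀)`, and at the
terminal point with `p = -(κ / r) (x₁ - x₀)`, where `κ = r / (1 + r (1 - s))`. These
multipliers make the terms linear in `∫ u` cancel, leaving `κ ‖x₁ - x₀‖² / 2`. The constant
control `u ≡ κ (x₁ - x₀)` turns both inequalities into equalities.
-/

section

variable {E : Type*} [NormedAddCommGroup E] [InnerProductSpace ℝ E]

theorem inner_sub_half_norm_sq_le (p v : E) :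
    ⟪p, v⟫ - 1 / 2 * ‖p‖ ^ 2 ≤ 1 / 2 * ‖v‖ ^ 2 := by
  nlinarith [norm_sub_sq_real v p, real_inner_comm p v]

theorem inner_intervalIntegral_sub_le_integral_half_norm_sq [CompleteSpace E] {a b : ℝ}
    (hab : a ≤ b) {u : ℝ → E} (hu : IntervalIntegrable u volume a b)
    (hu2 : IntervalIntegrable (fun τ => ‖u τ‖ ^ 2) volume a b) (p : E) :
    ⟪p, ∫ τ in a..b, u τ⟫ - (b - a) / 2 * ‖p‖ ^ 2 ≤ ∫ τ in a..b, 1 / 2 * ‖u τ‖ ^ 2 := by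
  have hpu : IntervalIntegrable (fun τ => ⟪p, u τ⟫) volume a b :=
    ⟨(innerSL ℝ p).integrable_comp hu.1, (innerSL ℝ p).integrable_comp hu.2⟩
  have hlhs : ∫ τ in a..b, (⟪p, u τ⟫ - 1 / 2 * ‖p‖ ^ 2) =
      ⟪p, ∫ τ in a..b, u τ⟫ - (b - a) / 2 * ‖p‖ ^ 2 := by
    rw [integral_sub hpu intervalIntegrable_const, intervalIntegral.integral_const, smul_eq_mul,
      ← innerSL_apply_apply ℝ, ← (innerSL ℝ p).intervalIntegral_comp_comm hu]
    simp only [innerSL_apply_apply]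
    ring
  rw [← hlhs]
  exact integral_mono_on hab (hpu.sub intervalIntegrable_const) (hu2.const_mul _)
    fun τ _ => inner_sub_half_norm_sq_le p (u τ)

theorem half_mul_norm_sq_le_dual_add_terminal_cost {r T κ : ℝ} (hr : 0 < r)
    (hκ : κ * (1 + r * T) = r) (v w : E) :
    κ / 2 * ‖w‖ ^ 2 ≤ ⟪κ • w, v⟫ - T / 2 * ‖κ • w‖ ^ 2 + r / 2 * ‖v - w‖ ^ 2 := by
  have hterm := inner_sub_half_norm_sq_le (-(κ / r) • w) (v - w)
  rw [real_inner_smul_left, inner_sub_right, real_inner_self_eq_norm_sq, norm_smul, mul_pow,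
    Real.norm_eq_abs, sq_abs] at hterm
  rw [real_inner_smul_left, norm_smul, mul_pow, Real.norm_eq_abs, sq_abs]
  have hm : κ / r = 1 - κ * T := by field_simp; linarith
  rw [hm] at hterm
  linear_combination r * hterm - (⟪w, v⟫ - ‖w‖ ^ 2 + (1 - κ * T) / 2 * ‖w‖ ^ 2) * hκ

theorem const_control_cost_eq {r T κ : ℝ} (hr : r ≠ 0)
    (hκ : κ * (1 + r * T) = r) (x₀ x₁ : E) :
    T * (1 / 2 * ‖κ • (x₁ - x₀)‖ ^ 2) + r / 2 * ‖x₀ + T • κ • (x₁ - x₀) - x₁‖ ^ 2 =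
      κ / 2 * ‖x₁ - x₀‖ ^ 2 := by
  have hm : T * κ - 1 = -(κ / r) := by field_simp; linarith
  have hx : x₀ + T • κ • (x₁ - x₀) - x₁ = -(κ / r) • (x₁ - x₀) := by
    rw [smul_smul, ← hm, sub_smul, one_smul]
    abel
  rw [hx, norm_smul, norm_smul, mul_pow, mul_pow, Real.norm_eq_abs, Real.norm_eq_abs, sq_abs,
    sq_abs]
  field_simp
  linear_combination ‖x₁ - x₀‖ ^ 2 * κ * hκ

end

/-- The constant control `u* ≡ (r/(1 + r(1−s))) • (x₁ − x₀)` is optimal for the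
linear-quadratic terminal-cost control problem `ẋ = u`, `x(s) = x₀`, with cost
`J(u) = ∫ₛ¹ ½‖u‖² + (r/2)‖x(1) − x₁‖²`: every admissible control has cost at least
`r‖x₁ − x₀‖²/(2(1 + r(1−s)))`, and `u*` attains this value. -/
theorem lq_terminal_cost_optimal_control
    {E : Type*} [NormedAddCommGroup E] [InnerProductSpace ℝ E] [CompleteSpace E]
    (s r : ℝ) (hs : s < 1) (hr : 0 < r) (x₀ x₁ : E)
    (J : (ℝ → E) → ℝ)
    (hJ : ∀ u : ℝ → E, J u =
      (∫ τ in s..1, (1 / 2) * ‖u τ‖ ^ 2)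
        + (r / 2) * ‖x₀ + (∫ τ in s..1, u τ) - x₁‖ ^ 2) :
    (∀ u : ℝ → E, IntervalIntegrable u volume s 1 →
      IntervalIntegrable (fun τ => ‖u τ‖ ^ 2) volume s 1 →
      J u ≥ r * ‖x₁ - x₀‖ ^ 2 / (2 * (1 + r * (1 - s)))) ∧
    J (fun _ => (r / (1 + r * (1 - s))) • (x₁ - x₀)) =
      r * ‖x₁ - x₀‖ ^ 2 / (2 * (1 + r * (1 - s))) := by
  have ha : 0 < 1 + r * (1 - s) := by nlinarith
  set κ := r / (1 + r * (1 - s)) with hκdef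
  have hκ : κ * (1 + r * (1 - s)) = r := div_mul_cancel₀ r ha.ne'
  have hvalue : r * ‖x₁ - x₀‖ ^ 2 / (2 * (1 + r * (1 - s))) = κ / 2 * ‖x₁ - x₀‖ ^ 2 := by
    rw [hκdef]; field_simp
  rw [hvalue]
  constructor
  · intro u hu hu2
    have hrun :=
      inner_intervalIntegral_sub_le_integral_half_norm_sq hs.le hu hu2 (κ • (x₁ - x₀))
    have hterm :=
      half_mul_norm_sq_le_dual_add_terminal_cost hr hκ (∫ τ in s..1, u τ) (x₁ - x₀)
    rw [hJ, show x₀ + (∫ τ in s..1, u τ) - x₁ = (∫ τ in s..1, u τ) - (x₁ - x₀) by abel]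
    linarith
  · rw [hJ, intervalIntegral.integral_const, intervalIntegral.integral_const, smul_eq_mul]
    exact const_control_cost_eq hr.ne' hκ x₀ x₁
end

section
/- Let g, ω ∈ ℝ and t ∈ ℝ, and let P t = !![ω(t−1)² − g²(t−1)³/3, ω(t−1) − g²(t−1)²/2; ω(t−1) − g²(t−1)²/2, g²(1−t) + ω]. Then det (P t) = (g²(t−1)³/12) · (g²(t−1) − 4ω). In particular, if g ≠ 0, t < 1 and ω ≥ 0 then det (P t) > 0, so P t is invertible. -/
open Matrix

/-- Determinant of the Lyapunov solution `P t`: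
`det (P t) = (g²(t−1)³/12)(g²(t−1) − 4ω)`; in particular `P t` is invertible whenever
`g ≠ 0`, `t < 1` and `ω ≥ 0`. -/
theorem lyapunov_solution_det
    (g ω t : ℝ) (P : Matrix (Fin 2) (Fin 2) ℝ)
    (hP : P = !![ω * (t - 1) ^ 2 - g ^ 2 * (t - 1) ^ 3 / 3,
                 ω * (t - 1) - g ^ 2 * (t - 1) ^ 2 / 2;
                 ω * (t - 1) - g ^ 2 * (t - 1) ^ 2 / 2,
                 g ^ 2 * (1 - t) + ω]) :
    P.det = (g ^ 2 * (t - 1) ^ 3 / 12) * (g ^ 2 * (t - 1) - 4 * ω) ∧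
    (g ≠ 0 → t < 1 → 0 ≤ ω → 0 < P.det) := by
  have hdet : P.det = (g ^ 2 * (t - 1) ^ 3 / 12) * (g ^ 2 * (t - 1) - 4 * ω) := by
    subst hP
    rw [Matrix.det_fin_two_of]
    ring
  refine ⟨hdet, fun hg ht hω => ?_⟩
  rw [hdet]
  have hg2 : 0 < g ^ 2 := by positivity
  have ht1 : t - 1 < 0 := by linarith
  have h1 : g ^ 2 * (t - 1) ^ 3 / 12 < 0 := by
    have : (t - 1) ^ 3 < 0 := Odd.pow_neg (by decide) ht1
    nlinarith
  have h2 : g ^ 2 * (t - 1) - 4 * ω < 0 := by nlinarith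
  exact mul_pos_of_neg_of_neg h1 h2
end
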